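/- Let p ≥ 2 be a natural number, let a > 0 and b > 0 be real numbers, and let θ be a real number with 4·a·b·θ² ≥ (a+b)². Let θ_0, θ_1, …, θ_p be positive real numbers satisfying θ_i·θ_{i+2} = θ²·θ_{i+1}² for all i = 0, …, p−2. Then for all nonnegative real numbers U, V and all vectors ξ, η in a real inner product space, the sum over i = 0, …, p−2 of C(p−2, i)·(a·θ_{i+2}·‖ξ‖² + (a+b)·θ_{i+1}·⟪ξ, η⟫ + b·θ_i·‖η‖²)·U^i·V^{p−2−i} is nonnegative, where C(n, k) denotes the binomial coefficient n!/(k!(n−k)!). -/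
import Mathlib


open scoped RealInnerProductSpace

lemma aux_quad (A B C x y t : ℝ) (hA : 0 ≤ A) (hC : 0 ≤ C) (hB : B ^ 2 ≤ 4 * A * C)
    (hx : 0 ≤ x) (hy : 0 ≤ y) (ht : |t| ≤ x * y) :
    0 ≤ A * x ^ 2 + B * t + C * y ^ 2 := by
  have h1 : B * t ≥ -(|B| * (x * y)) := by
    have := abs_mul B t
    have h2 : |B * t| ≤ |B| * (x * y) := by
      rw [abs_mul]
      exact mul_le_mul_of_nonneg_left ht (abs_nonneg B)
    linarith [neg_abs_le (B * t)]
  have hsq : 4 * A * C = (2 * Real.sqrt A * Real.sqrt C) ^ 2 := by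
    rw [mul_pow, mul_pow, Real.sq_sqrt hA, Real.sq_sqrt hC]; ring
  have hB' : |B| ≤ 2 * Real.sqrt A * Real.sqrt C := by
    rw [← Real.sqrt_sq_eq_abs]
    calc Real.sqrt (B ^ 2) ≤ Real.sqrt (4 * A * C) := Real.sqrt_le_sqrt hB
      _ = 2 * Real.sqrt A * Real.sqrt C := by
          rw [hsq, Real.sqrt_sq (by positivity)]
  have key : |B| * (x * y) ≤ A * x ^ 2 + C * y ^ 2 := by
    have h2 : |B| * (x * y) ≤ 2 * Real.sqrt A * Real.sqrt C * (x * y) :=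
      mul_le_mul_of_nonneg_right hB' (mul_nonneg hx hy)
    nlinarith [sq_nonneg (Real.sqrt A * x - Real.sqrt C * y), Real.sq_sqrt hA,
      Real.sq_sqrt hC]
  linarith

/-- Pointwise nonnegativity of the integrand of the term `I` in the derivative of the
Lyapunov functional. -/
theorem stmt_1 {E : Type*} [NormedAddCommGroup E] [InnerProductSpace ℝ E]
    (p : ℕ) (hp : 2 ≤ p) (a b θ : ℝ) (ha : 0 < a) (hb : 0 < b)
    (hθ : 4 * a * b * θ ^ 2 ≥ (a + b) ^ 2)
    (w : ℕ → ℝ) (hw : ∀ i, i ≤ p → 0 < w i)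
    (hrec : ∀ i, i ≤ p - 2 → w i * w (i + 2) = θ ^ 2 * (w (i + 1)) ^ 2)
    (U V : ℝ) (hU : 0 ≤ U) (hV : 0 ≤ V) (ξ η : E) :
    0 ≤ ∑ i ∈ Finset.range (p - 1),
      ((p - 2).choose i : ℝ) *
        (a * w (i + 2) * ‖ξ‖ ^ 2 + (a + b) * w (i + 1) * ⟪ξ, η⟫ + b * w i * ‖η‖ ^ 2) *
        U ^ i * V ^ (p - 2 - i) := by
  apply Finset.sum_nonneg
  intro i hi
  rw [Finset.mem_range] at hi
  have hip2 : i ≤ p - 2 := by omega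
  have hi2p : i + 2 ≤ p := by omega
  have hw0 := hw i (by omega)
  have hw1 := hw (i + 1) (by omega)
  have hw2 := hw (i + 2) hi2p
  have hquad : 0 ≤ a * w (i + 2) * ‖ξ‖ ^ 2 + (a + b) * w (i + 1) * ⟪ξ, η⟫ + b * w i * ‖η‖ ^ 2 := by
    apply aux_quad
    · positivity
    · positivity
    · have hr := hrec i hip2
      have h3 := mul_le_mul_of_nonneg_right hθ (sq_nonneg (w (i + 1)))
      have h4 : 4 * a * b * (w i * w (i + 2)) = 4 * a * b * (θ ^ 2 * w (i + 1) ^ 2) := by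
        rw [hr]
      nlinarith [h3, h4]
    · exact norm_nonneg ξ
    · exact norm_nonneg η
    · exact abs_real_inner_le_norm ξ η
  positivity
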